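/- arXiv:1504.01548 — 4 statements merged into one kernel-verified Lean document; each statement's English description precedes it below -/
import Mathlib

section
/- Suppose φ₁, …, φₙ are C¹ Koopman eigenfunctions of the flow ψ with eigenvalues λ₁, …, λₙ satisfying λ₁ ∈ ℝ and Re(λⱼ) ≤ λ₁ for j ≥ 2. Define K(x) = { δx : Dφ₁(x)[δx] − |Dφⱼ(x)[δx]| ≥ 0 for all j ≥ 2 }. Then for all t > 0 and all x, the linearized flow maps the cone into itself: Dₓψ(t,x)[K(x)] ⊆ K(ψ(t,x)). -/
/-!
Differentiating `φ ∘ ψ t = e^{λ t} φ` by the chain rule shows that `Dψ(t,x)` scales `Dφ₁` by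
`e^{λ₁ t}` and `Dφⱼ` by `e^{λⱼ t}`, whose modulus `e^{Re λⱼ t}` is at most `e^{λ₁ t}` for `t ≥ 0`.
-/

section KoopmanEigenfunction

variable {𝕜 R E F : Type*} [NontriviallyNormedField 𝕜]
  [NormedAddCommGroup E] [NormedSpace 𝕜 E] [NormedAddCommGroup F] [NormedSpace 𝕜 F]
  [Semiring R] [Module R F] [SMulCommClass 𝕜 R F] [ContinuousConstSMul R F]

theorem fderiv_apply_fderiv_of_comp_eq_smul {g : E → F} {Φ : E → E} {c : R} {x : E}
    (hg : Differentiable 𝕜 g) (hΦ : DifferentiableAt 𝕜 Φ x) (h : ∀ y, g (Φ y) = c • g y)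
    (v : E) : fderiv 𝕜 g (Φ x) (fderiv 𝕜 Φ x v) = c • fderiv 𝕜 g x v := by
  have hcomp : g ∘ Φ = c • g := funext h
  rw [← ContinuousLinearMap.comp_apply, ← fderiv_comp x (hg _) hΦ, hcomp,
    fderiv_const_smul (hg x)]
  rfl

end KoopmanEigenfunction

theorem norm_cexp_mul_le_exp_mul {μ z : ℂ} {l t a : ℝ} (hμ : μ.re ≤ l) (ht : 0 ≤ t)
    (hz : ‖z‖ ≤ a) : ‖Complex.exp (μ * t) * z‖ ≤ Real.exp (l * t) * a := by
  rw [norm_mul, Complex.norm_exp, Complex.re_mul_ofReal]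
  exact mul_le_mul (Real.exp_le_exp.mpr (mul_le_mul_of_nonneg_right hμ ht)) hz
    (norm_nonneg _) (Real.exp_nonneg _)

theorem stmt3_general {n m : ℕ} (ψ : ℝ → (Fin n → ℝ) → (Fin n → ℝ))
    (hψC : ∀ t, ContDiff ℝ 1 (ψ t))
    (φ₁ : (Fin n → ℝ) → ℝ) (lam₁ : ℝ)
    (φ : Fin m → ((Fin n → ℝ) → ℂ)) (lam : Fin m → ℂ)
    (hφ₁ : ContDiff ℝ 1 φ₁) (hφ : ∀ j, ContDiff ℝ 1 (φ j))
    (heig₁ : ∀ t x, φ₁ (ψ t x) = Real.exp (lam₁ * t) * φ₁ x)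
    (heig : ∀ j t x, φ j (ψ t x) = Complex.exp (lam j * t) * φ j x)
    (hdom : ∀ j, (lam j).re ≤ lam₁)
    (K : (Fin n → ℝ) → Set (Fin n → ℝ))
    (hK : ∀ x, K x =
      {δx | ∀ j, fderiv ℝ φ₁ x δx - ‖fderiv ℝ (φ j) x δx‖ ≥ 0}) :
    ∀ t > (0:ℝ), ∀ x : Fin n → ℝ, ∀ δx ∈ K x, fderiv ℝ (ψ t) x δx ∈ K (ψ t x) := by
  intro t ht x δx hδ
  rw [hK] at hδ ⊢
  intro j
  have hψt : DifferentiableAt ℝ (ψ t) x := (hψC t).differentiable one_ne_zero x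
  have h₁ := fderiv_apply_fderiv_of_comp_eq_smul (hφ₁.differentiable one_ne_zero) hψt
    (c := Real.exp (lam₁ * t)) (heig₁ t) δx
  have hj := fderiv_apply_fderiv_of_comp_eq_smul ((hφ j).differentiable one_ne_zero) hψt
    (c := Complex.exp (lam j * t)) (heig j t) δx
  rw [smul_eq_mul] at h₁ hj
  rw [h₁, hj, ge_iff_le, sub_nonneg]
  exact norm_cexp_mul_le_exp_mul (hdom j) ht.le (sub_nonneg.mp (hδ j))

/-- Cone invariance from Koopman eigenfunctions: with `φ₁` a real-valued eigenfunction
with real eigenvalue `λ₁` and complex eigenfunctions `φⱼ` with `Re λⱼ ≤ λ₁`, the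
linearized flow maps `K(x)` into `K(ψ t x)` for `t > 0`. -/
theorem stmt3 {n m : ℕ} (f : (Fin n → ℝ) → (Fin n → ℝ)) (ψ : ℝ → (Fin n → ℝ) → (Fin n → ℝ))
    (hf : ContDiff ℝ 2 f)
    (hflow : ∀ t x, HasDerivAt (fun s => ψ s x) (f (ψ t x)) t)
    (hψ0 : ∀ x, ψ 0 x = x)
    (hψC : ∀ t, ContDiff ℝ 1 (ψ t))
    (φ₁ : (Fin n → ℝ) → ℝ) (lam₁ : ℝ)
    (φ : Fin m → ((Fin n → ℝ) → ℂ)) (lam : Fin m → ℂ)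
    (hφ₁ : ContDiff ℝ 1 φ₁) (hφ : ∀ j, ContDiff ℝ 1 (φ j))
    (heig₁ : ∀ t x, φ₁ (ψ t x) = Real.exp (lam₁ * t) * φ₁ x)
    (heig : ∀ j t x, φ j (ψ t x) = Complex.exp (lam j * t) * φ j x)
    (hdom : ∀ j, (lam j).re ≤ lam₁)
    (K : (Fin n → ℝ) → Set (Fin n → ℝ))
    (hK : ∀ x, K x =
      {δx | ∀ j, fderiv ℝ φ₁ x δx - ‖fderiv ℝ (φ j) x δx‖ ≥ 0}) :
    ∀ t > (0:ℝ), ∀ x : Fin n → ℝ, ∀ δx ∈ K x, fderiv ℝ (ψ t) x δx ∈ K (ψ t x) :=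
  stmt3_general ψ hψC φ₁ lam₁ φ lam hφ₁ hφ heig₁ heig hdom K hK
end

section
/- Let φ₁, …, φₙ be C¹ Koopman eigenfunctions with λ₁ ∈ ℝ and Re(λⱼ) ≤ λ₁. If δx ∈ K(x) (i.e. Dφ₁(x)[δx] ≥ |Dφⱼ(x)[δx]| for all j ≥ 2), then for every t > 0 and every j ≥ 2, Dφ₁(ψ(t,x))[Dψᵗ(x)δx] − |Dφⱼ(ψ(t,x))[Dψᵗ(x)δx]| ≥ e^{λ₁ t} ( Dφ₁(x)[δx] − |Dφⱼ(x)[δx]| ). -/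
/-!
Differentiating the eigenfunction identity `φ ∘ ψᵗ = e^{λt} φ` at `x` in the direction `δx`
gives `Dφ(ψᵗx)[Dψᵗ(x)δx] = e^{λt} Dφ(x)[δx]`. So the `φ₁`-component grows exactly by
`e^{λ₁t}`, while each `|Dφⱼ|`-component is multiplied by `e^{Re(λⱼ)t} ≤ e^{λ₁t}`.
-/

section EigenfunctionDerivative

variable {𝕜 : Type*} [NontriviallyNormedField 𝕜] {E : Type*} [NormedAddCommGroup E]
  [NormedSpace 𝕜 E] {𝔸 : Type*} [NormedRing 𝔸] [NormedAlgebra 𝕜 𝔸]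

theorem fderiv_apply_fderiv_eq_mul_of_comp_eq_mul {g : E → 𝔸} {T : E → E} {c : 𝔸} {x : E}
    (hg : Differentiable 𝕜 g) (hT : DifferentiableAt 𝕜 T x) (hgT : ∀ y, g (T y) = c * g y)
    (v : E) : fderiv 𝕜 g (T x) (fderiv 𝕜 T x v) = c * fderiv 𝕜 g x v := by
  have hcomp : fderiv 𝕜 (g ∘ T) x = (fderiv 𝕜 g (T x)).comp (fderiv 𝕜 T x) :=
    fderiv_comp x (hg _) hT
  have hmul : fderiv 𝕜 (g ∘ T) x = c • fderiv 𝕜 g x := by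
    rw [show g ∘ T = fun y => c * g y from funext hgT]
    exact fderiv_const_mul (hg x) c
  simpa using congrArg (fun L : E →L[𝕜] 𝔸 => L v) (hcomp.symm.trans hmul)

end EigenfunctionDerivative

theorem Complex.norm_exp_mul_ofReal_le {μ : ℂ} {ν t : ℝ} (hμ : μ.re ≤ ν) (ht : 0 ≤ t) :
    ‖Complex.exp (μ * t)‖ ≤ Real.exp (ν * t) := by
  rw [Complex.norm_exp, Complex.re_mul_ofReal]
  exact Real.exp_le_exp.mpr (mul_le_mul_of_nonneg_right hμ ht)

theorem stmt4_general {n m : ℕ} (ψ : ℝ → (Fin n → ℝ) → (Fin n → ℝ))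
    (hψC : ∀ t, ContDiff ℝ 1 (ψ t))
    (φ₁ : (Fin n → ℝ) → ℝ) (lam₁ : ℝ)
    (φ : Fin m → ((Fin n → ℝ) → ℂ)) (lam : Fin m → ℂ)
    (hφ₁ : ContDiff ℝ 1 φ₁) (hφ : ∀ j, ContDiff ℝ 1 (φ j))
    (heig₁ : ∀ t x, φ₁ (ψ t x) = Real.exp (lam₁ * t) * φ₁ x)
    (heig : ∀ j t x, φ j (ψ t x) = Complex.exp (lam j * t) * φ j x)
    (hdom : ∀ j, (lam j).re ≤ lam₁) :
    ∀ (x δx : Fin n → ℝ),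
      (∀ j, ‖fderiv ℝ (φ j) x δx‖ ≤ fderiv ℝ φ₁ x δx) →
      ∀ t > (0:ℝ), ∀ j,
        fderiv ℝ φ₁ (ψ t x) (fderiv ℝ (ψ t) x δx)
            - ‖fderiv ℝ (φ j) (ψ t x) (fderiv ℝ (ψ t) x δx)‖
          ≥ Real.exp (lam₁ * t) *
            (fderiv ℝ φ₁ x δx - ‖fderiv ℝ (φ j) x δx‖) := by
  intro x δx _ t ht j
  have hψ : DifferentiableAt ℝ (ψ t) x := (hψC t).differentiable one_ne_zero x
  rw [fderiv_apply_fderiv_eq_mul_of_comp_eq_mul (hφ₁.differentiable one_ne_zero) hψ (heig₁ t),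
    fderiv_apply_fderiv_eq_mul_of_comp_eq_mul ((hφ j).differentiable one_ne_zero) hψ (heig j t),
    norm_mul, mul_sub]
  have hexp := Complex.norm_exp_mul_ofReal_le (hdom j) ht.le
  have := mul_le_mul_of_nonneg_right hexp (norm_nonneg (fderiv ℝ (φ j) x δx))
  linarith

/-- Quantitative cone contraction inequality: if `Dφ₁(x)δx ≥ |Dφⱼ(x)δx|` for all `j ≥ 2`,
then for `t > 0`,
`Dφ₁(ψ t x)[Dψᵗ(x)δx] − |Dφⱼ(ψ t x)[Dψᵗ(x)δx]| ≥ e^{λ₁ t}(Dφ₁(x)δx − |Dφⱼ(x)δx|)`. -/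
theorem stmt4 {n m : ℕ} (f : (Fin n → ℝ) → (Fin n → ℝ)) (ψ : ℝ → (Fin n → ℝ) → (Fin n → ℝ))
    (hf : ContDiff ℝ 2 f)
    (hflow : ∀ t x, HasDerivAt (fun s => ψ s x) (f (ψ t x)) t)
    (hψ0 : ∀ x, ψ 0 x = x)
    (hψC : ∀ t, ContDiff ℝ 1 (ψ t))
    (φ₁ : (Fin n → ℝ) → ℝ) (lam₁ : ℝ)
    (φ : Fin m → ((Fin n → ℝ) → ℂ)) (lam : Fin m → ℂ)
    (hφ₁ : ContDiff ℝ 1 φ₁) (hφ : ∀ j, ContDiff ℝ 1 (φ j))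
    (heig₁ : ∀ t x, φ₁ (ψ t x) = Real.exp (lam₁ * t) * φ₁ x)
    (heig : ∀ j t x, φ j (ψ t x) = Complex.exp (lam j * t) * φ j x)
    (hdom : ∀ j, (lam j).re ≤ lam₁) :
    ∀ (x δx : Fin n → ℝ),
      (∀ j, ‖fderiv ℝ (φ j) x δx‖ ≤ fderiv ℝ φ₁ x δx) →
      ∀ t > (0:ℝ), ∀ j,
        fderiv ℝ φ₁ (ψ t x) (fderiv ℝ (ψ t) x δx)
            - ‖fderiv ℝ (φ j) (ψ t x) (fderiv ℝ (ψ t) x δx)‖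
          ≥ Real.exp (lam₁ * t) *
            (fderiv ℝ φ₁ x δx - ‖fderiv ℝ (φ j) x δx‖) :=
  stmt4_general ψ hψC φ₁ lam₁ φ lam hφ₁ hφ heig₁ heig hdom
end

section
/- Suppose φ₂, …, φₙ are C¹ Koopman eigenfunctions with Re(λⱼ) < Re(λ₁) for j ≥ 2 and the map δx ↦ (Dφ₁(x)δx, …, Dφₙ(x)δx) is injective at every x, where φ₁ is a Koopman eigenfunction with real λ₁ (or with |φ₁| constant and λ₁ ∈ iℝ). If w : X → ℝⁿ is the Perron–Frobenius vector field, i.e. w(x) = lim_{t→∞} Dψᵗ(ψ(−t,x))δx / |Dψᵗ(ψ(−t,x))δx| for all admissible δx, then Dφⱼ(x)[w(x)] = 0 for all j ≥ 2. -/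
/-!
Fix `x` and a direction `δx` lying in the cones `K (ψ (-t) x)` for all `t ≥ 0`, and push it forward
from `y = ψ (-t) x` to `x`. The eigenfunction relations turn the chain rule into
`Dφⱼ(x) (Dψᵗ(y) δx) = e^{λⱼ t} Dφⱼ(y) δx` and `Dφ₁(x) (Dψᵗ(y) δx) = e^{λ₁ t} Dφ₁(y) δx`, so the cone
inequality `|Dφⱼ(y) δx| ≤ Dφ₁(y) δx` becomes `|Dφⱼ(x) u| ≤ e^{(Re λⱼ - λ₁) t} Dφ₁(x) u` for the
normalized push-forward `u`. As `t → ∞`, `u → w(x)` and the factor tends to `0`.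
-/

open Filter Topology

section Semiconjugacy

variable {E : Type*} [NormedAddCommGroup E] [NormedSpace ℝ E]
  {𝔸 : Type*} [NormedRing 𝔸] [NormedAlgebra ℝ 𝔸]

theorem fderiv_apply_fderiv_of_comp_eq_mul {g : E → 𝔸} {F : E → E}
    (hg : Differentiable ℝ g) (hF : Differentiable ℝ F)
    {c : 𝔸} (h : ∀ y, g (F y) = c * g y) (y v : E) :
    fderiv ℝ g (F y) (fderiv ℝ F y v) = c * fderiv ℝ g y v := by
  have hcomp : g ∘ F = fun y => c * g y := funext h
  have key : (fderiv ℝ g (F y)).comp (fderiv ℝ F y) = c • fderiv ℝ g y := by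
    rw [← fderiv_comp y (hg _) (hF y), hcomp, fderiv_const_mul (hg y)]
  simpa using congrArg (fun T : E →L[ℝ] 𝔸 => T v) key

theorem norm_fderiv_le_mul_fderiv_of_comp_eq_mul {F : E → E} {g₁ : E → ℝ} {g : E → 𝔸}
    {a : ℝ} {c : 𝔸} (hF : Differentiable ℝ F) (hg₁ : Differentiable ℝ g₁)
    (hg : Differentiable ℝ g) (ha : 0 < a)
    (h₁ : ∀ y, g₁ (F y) = a * g₁ y) (h : ∀ y, g (F y) = c * g y)
    {y v : E} (hv : ‖fderiv ℝ g y v‖ ≤ fderiv ℝ g₁ y v) {s : ℝ} (hs : 0 ≤ s) :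
    ‖fderiv ℝ g (F y) (s • fderiv ℝ F y v)‖ ≤
      ‖c‖ / a * fderiv ℝ g₁ (F y) (s • fderiv ℝ F y v) := by
  rw [map_smul, map_smul, fderiv_apply_fderiv_of_comp_eq_mul hg hF h,
    fderiv_apply_fderiv_of_comp_eq_mul hg₁ hF h₁, norm_smul, Real.norm_of_nonneg hs,
    smul_eq_mul]
  calc s * ‖c * fderiv ℝ g y v‖ ≤ s * (‖c‖ * fderiv ℝ g₁ y v) := by
        gcongr
        exact (norm_mul_le _ _).trans (by gcongr)
    _ = ‖c‖ / a * (s * (a * fderiv ℝ g₁ y v)) := by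
        field_simp

end Semiconjugacy

theorem eq_zero_of_tendsto_of_norm_le_mul {α E F : Type*} {l : Filter α} [l.NeBot]
    [NormedAddCommGroup E] [NormedSpace ℝ E] [NormedAddCommGroup F] [NormedSpace ℝ F]
    {ℓ₁ : E →L[ℝ] ℝ} {ℓ : E →L[ℝ] F} {u : α → E} {w : E} {k : α → ℝ}
    (hu : Tendsto u l (𝓝 w)) (hk : Tendsto k l (𝓝 0))
    (hle : ∀ᶠ t in l, ‖ℓ (u t)‖ ≤ k t * ℓ₁ (u t)) :
    ℓ w = 0 := by
  have hlim : Tendsto (fun t => k t * ℓ₁ (u t)) l (𝓝 0) := by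
    simpa using hk.mul ((ℓ₁.continuous.tendsto w).comp hu)
  have hnorm : ‖ℓ w‖ ≤ 0 :=
    le_of_tendsto_of_tendsto ((ℓ.continuous.norm.tendsto w).comp hu) hlim hle
  exact norm_le_zero_iff.mp hnorm

theorem tendsto_norm_cexp_div_exp_atTop {μ : ℂ} {ν : ℝ} (h : μ.re < ν) :
    Tendsto (fun t : ℝ => ‖Complex.exp (μ * t)‖ / Real.exp (ν * t)) atTop (𝓝 0) := by
  have hexp : (fun t : ℝ => ‖Complex.exp (μ * t)‖ / Real.exp (ν * t)) =
      fun t => Real.exp ((μ.re - ν) * t) := by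
    ext t
    rw [Complex.norm_exp, Complex.re_mul_ofReal, ← Real.exp_sub]
    ring_nf
  rw [hexp]
  exact Real.tendsto_exp_atBot.comp
    ((tendsto_const_mul_atBot_of_neg (sub_neg.mpr h)).mpr tendsto_id)

theorem stmt10_general {n m : ℕ} (ψ : ℝ → (Fin n → ℝ) → (Fin n → ℝ))
    (hψ0 : ∀ x, ψ 0 x = x)
    (hgrp : ∀ s t x, ψ t (ψ s x) = ψ (t + s) x)
    (hψC : ∀ t, ContDiff ℝ 1 (ψ t))
    (φ₁ : (Fin n → ℝ) → ℝ) (lam₁ : ℝ)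
    (φ : Fin m → ((Fin n → ℝ) → ℂ)) (lam : Fin m → ℂ)
    (hφ₁ : ContDiff ℝ 1 φ₁) (hφ : ∀ j, ContDiff ℝ 1 (φ j))
    (heig₁ : ∀ t x, φ₁ (ψ t x) = Real.exp (lam₁ * t) * φ₁ x)
    (heig : ∀ j t x, φ j (ψ t x) = Complex.exp (lam j * t) * φ j x)
    (hdom : ∀ j, (lam j).re < lam₁)
    (K : (Fin n → ℝ) → Set (Fin n → ℝ))
    (hK : ∀ x, K x =
      {δx | ∀ j, fderiv ℝ φ₁ x δx - ‖fderiv ℝ (φ j) x δx‖ ≥ 0})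
    (w : (Fin n → ℝ) → (Fin n → ℝ))
    (hw : ∀ x : Fin n → ℝ, ∀ δx : Fin n → ℝ, δx ≠ 0 →
      (∀ t : ℝ, 0 ≤ t → δx ∈ K (ψ (-t) x)) →
      Filter.Tendsto
        (fun t : ℝ => ‖fderiv ℝ (ψ t) (ψ (-t) x) δx‖⁻¹ • fderiv ℝ (ψ t) (ψ (-t) x) δx)
        Filter.atTop (nhds (w x)))
    (hwex : ∀ x : Fin n → ℝ, ∃ δx : Fin n → ℝ, δx ≠ 0 ∧
      ∀ t : ℝ, 0 ≤ t → δx ∈ K (ψ (-t) x)) :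
    ∀ (j : Fin m) (x : Fin n → ℝ), fderiv ℝ (φ j) x (w x) = 0 := by
  intro j x
  obtain ⟨δx, hδx, hcone⟩ := hwex x
  refine eq_zero_of_tendsto_of_norm_le_mul (ℓ₁ := fderiv ℝ φ₁ x) (hw x δx hδx hcone)
    (tendsto_norm_cexp_div_exp_atTop (hdom j)) ?_
  filter_upwards [eventually_ge_atTop 0] with t ht
  have hcone_t : ‖fderiv ℝ (φ j) (ψ (-t) x) δx‖ ≤ fderiv ℝ φ₁ (ψ (-t) x) δx := by
    have hmem := hcone t ht
    rw [hK] at hmem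
    exact sub_nonneg.mp (hmem j)
  have hback : ψ t (ψ (-t) x) = x := by rw [hgrp, add_neg_cancel, hψ0]
  have hbound := norm_fderiv_le_mul_fderiv_of_comp_eq_mul
    ((hψC t).differentiable one_ne_zero) (hφ₁.differentiable one_ne_zero)
    ((hφ j).differentiable one_ne_zero) (Real.exp_pos _) (heig₁ t) (heig j t)
    hcone_t (inv_nonneg.mpr (norm_nonneg (fderiv ℝ (ψ t) (ψ (-t) x) δx)))
  rwa [hback] at hbound

/-- The Perron–Frobenius vector field `w`, defined as the backward-time limit of the
normalized linearized flow applied to cone directions, annihilates the differentials of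
the non-dominant Koopman eigenfunctions: `Dφⱼ(x)[w(x)] = 0` for `j ≥ 2`. -/
theorem stmt10 {n m : ℕ} (f : (Fin n → ℝ) → (Fin n → ℝ)) (ψ : ℝ → (Fin n → ℝ) → (Fin n → ℝ))
    (hf : ContDiff ℝ 2 f)
    (hflow : ∀ t x, HasDerivAt (fun s => ψ s x) (f (ψ t x)) t)
    (hψ0 : ∀ x, ψ 0 x = x)
    (hgrp : ∀ s t x, ψ t (ψ s x) = ψ (t + s) x)
    (hψC : ∀ t, ContDiff ℝ 1 (ψ t))
    (φ₁ : (Fin n → ℝ) → ℝ) (lam₁ : ℝ)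
    (φ : Fin m → ((Fin n → ℝ) → ℂ)) (lam : Fin m → ℂ)
    (hφ₁ : ContDiff ℝ 1 φ₁) (hφ : ∀ j, ContDiff ℝ 1 (φ j))
    (heig₁ : ∀ t x, φ₁ (ψ t x) = Real.exp (lam₁ * t) * φ₁ x)
    (heig : ∀ j t x, φ j (ψ t x) = Complex.exp (lam j * t) * φ j x)
    (hdom : ∀ j, (lam j).re < lam₁)
    (hinj : ∀ x, Function.Injective
      (fun δx : Fin n → ℝ =>
        (((fderiv ℝ φ₁ x δx : ℝ) : ℂ), fun j => fderiv ℝ (φ j) x δx)))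
    (K : (Fin n → ℝ) → Set (Fin n → ℝ))
    (hK : ∀ x, K x =
      {δx | ∀ j, fderiv ℝ φ₁ x δx - ‖fderiv ℝ (φ j) x δx‖ ≥ 0})
    (w : (Fin n → ℝ) → (Fin n → ℝ))
    (hw : ∀ x : Fin n → ℝ, ∀ δx : Fin n → ℝ, δx ≠ 0 →
      (∀ t : ℝ, 0 ≤ t → δx ∈ K (ψ (-t) x)) →
      Filter.Tendsto
        (fun t : ℝ => ‖fderiv ℝ (ψ t) (ψ (-t) x) δx‖⁻¹ • fderiv ℝ (ψ t) (ψ (-t) x) δx)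
        Filter.atTop (nhds (w x)))
    (hwex : ∀ x : Fin n → ℝ, ∃ δx : Fin n → ℝ, δx ≠ 0 ∧
      ∀ t : ℝ, 0 ≤ t → δx ∈ K (ψ (-t) x)) :
    ∀ (j : Fin m) (x : Fin n → ℝ), fderiv ℝ (φ j) x (w x) = 0 :=
  stmt10_general ψ hψ0 hgrp hψC φ₁ lam₁ φ lam hφ₁ hφ heig₁ heig hdom K hK w hw hwex
end

section
/- Let A ∈ ℝ²ˣ² have complex conjugate eigenvalues a ± ib with b ≠ 0. Then there is no closed convex pointed cone K ⊆ ℝ² with K ≠ {0} such that e^{At}K ⊆ K for all t ≥ 0. -/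
/-!
Cayley–Hamilton in dimension two turns the complex eigenvalue `a + ib` into
`(A - a)² = -b²`, so `ℂ` acts on `ℝ²` with `i ↦ (A - a)/b` and `e^{tA}` is the image of
`e^{t(a + ib)}`: a rotation by the angle `tb` composed with the scaling `e^{ta}`. At
`t = π/|b|` it is the negative multiple `-e^{ta}` of the identity, which maps every ray of an
invariant cone onto the opposite ray; a pointed cone therefore contains no nonzero vector.
-/

open Matrix

namespace Matrix

theorem mul_self_fin_two {R : Type*} [CommRing R] (M : Matrix (Fin 2) (Fin 2) R) :
    M * M = M.trace • M - M.det • 1 := by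
  ext i j
  fin_cases i <;> fin_cases j <;>
    simp [mul_apply, trace_fin_two, det_fin_two, Fin.sum_univ_two] <;> ring

theorem sq_sub_trace_mul_add_det_of_mulVec_eq_smul {K : Type*} [Field K]
    {M : Matrix (Fin 2) (Fin 2) K} {μ : K} {v : Fin 2 → K} (hv : v ≠ 0)
    (hMv : M *ᵥ v = μ • v) :
    μ ^ 2 - M.trace * μ + M.det = 0 := by
  have h := congrArg (· *ᵥ v) M.mul_self_fin_two
  simp only [← mulVec_mulVec, hMv, mulVec_smul, sub_mulVec, smul_mulVec, one_mulVec] at h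
  have hμ : (μ ^ 2 - M.trace * μ + M.det) • v = 0 := by
    rw [← sub_eq_zero] at h
    rw [← h]
    module
  exact (smul_eq_zero.1 hμ).resolve_right hv

theorem trace_eq_and_det_eq_of_complex_eigenvalue {A : Matrix (Fin 2) (Fin 2) ℝ} {a b : ℝ}
    (hb : b ≠ 0) {v : Fin 2 → ℂ} (hv : v ≠ 0)
    (hAv : A.map Complex.ofReal *ᵥ v = Complex.mk a b • v) :
    A.trace = 2 * a ∧ A.det = a ^ 2 + b ^ 2 := by
  have h := sq_sub_trace_mul_add_det_of_mulVec_eq_smul hv hAv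
  have htr : (A.map Complex.ofReal).trace = A.trace := by simp [trace_fin_two]
  have hdet : (A.map Complex.ofReal).det = A.det := (Complex.ofRealHom.map_det A).symm
  rw [htr, hdet, Complex.ext_iff] at h
  simp only [sq, Complex.sub_re, Complex.add_re, Complex.mul_re, Complex.ofReal_re,
    Complex.ofReal_im, Complex.sub_im, Complex.add_im, Complex.mul_im, Complex.zero_re,
    Complex.zero_im] at h
  obtain ⟨hre, him⟩ := h
  have htrace : A.trace = 2 * a := mul_right_cancel₀ hb (by linear_combination -him)
  refine ⟨htrace, ?_⟩
  rw [htrace] at hre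
  linear_combination hre

theorem sub_smul_one_mul_self_fin_two {R : Type*} [CommRing R]
    {M : Matrix (Fin 2) (Fin 2) R} {a b : R} (htr : M.trace = 2 * a)
    (hdet : M.det = a ^ 2 + b ^ 2) :
    (M - a • 1) * (M - a • 1) = -(b ^ 2) • 1 := by
  simp only [sub_mul, mul_sub, mul_one, one_mul, smul_mul_assoc, mul_smul_comm,
    M.mul_self_fin_two, htr, hdet]
  module

end Matrix

theorem NormedSpace.exp_smul_of_sub_mul_self_eq {𝔸 : Type*} [NormedRing 𝔸] [NormedAlgebra ℝ 𝔸]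
    [Algebra ℚ 𝔸] {x : 𝔸} {a b : ℝ} (hb : b ≠ 0)
    (hx : (x - a • 1) * (x - a • 1) = -(b ^ 2) • 1) (t : ℝ) :
    exp (t • x) = (Real.exp (t * a) * Real.cos (t * b)) • 1 +
      (Real.exp (t * a) * Real.sin (t * b) / b) • (x - a • 1) := by
  set J := b⁻¹ • (x - a • 1)
  have hJ : J * J = -1 := by
    rw [smul_mul_smul_comm, hx, smul_smul]
    field_simp
    simp
  let φ := Complex.liftAux J hJ
  have hφ (z : ℂ) : φ z = z.re • 1 + z.im • J := by
    simp [φ, Complex.liftAux_apply, Algebra.algebraMap_eq_smul_one]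
  have hφx : φ ⟨t * a, t * b⟩ = t • x := by
    rw [hφ]
    simp only [J, smul_smul]
    field_simp
    module
  have hφc : Continuous φ := φ.toLinearMap.continuous_of_finiteDimensional
  rw [← hφx, ← map_exp φ hφc, ← Complex.exp_eq_exp_ℂ, hφ, Complex.exp_re, Complex.exp_im]
  simp only [J, smul_smul]
  module

theorem eq_zero_of_neg_smul_mem_of_pointed {E : Type*} [AddCommGroup E] [Module ℝ E] {K : Set E}
    (hsmul : ∀ c : ℝ, 0 ≤ c → ∀ x ∈ K, c • x ∈ K) (hK : K ∩ -K = {0}) {x : E} (hx : x ∈ K)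
    {c : ℝ} (hc : c < 0) (hcx : c • x ∈ K) : x = 0 := by
  have hneg : -x ∈ K := by
    simpa [smul_smul, inv_mul_cancel₀ hc.ne] using hsmul (-c)⁻¹ (by simpa using hc.le) _ hcx
  have : x ∈ K ∩ -K := ⟨hx, by simpa using hneg⟩
  rwa [hK] at this

/-- A real `2×2` matrix with complex conjugate eigenvalues `a ± ib`, `b ≠ 0`, admits no
nontrivial closed convex pointed cone invariant under its flow `e^{At}`, `t ≥ 0`. -/
theorem stmt18 (A : Matrix (Fin 2) (Fin 2) ℝ) (a b : ℝ) (hb : b ≠ 0)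
    (heig : ∃ v : Fin 2 → ℂ, v ≠ 0 ∧ (A.map Complex.ofReal).mulVec v = (Complex.mk a b) • v) :
    ¬ ∃ K : Set (Fin 2 → ℝ),
        (0:Fin 2 → ℝ) ∈ K ∧ K ≠ {0} ∧ IsClosed K ∧
        (∀ x ∈ K, ∀ y ∈ K, x + y ∈ K) ∧
        (∀ (c : ℝ), 0 ≤ c → ∀ x ∈ K, c • x ∈ K) ∧
        K ∩ (-K) = {0} ∧
        (∀ t : ℝ, 0 ≤ t → ∀ x ∈ K, (NormedSpace.exp (t • A)).mulVec x ∈ K) := by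
  rintro ⟨K, hK0, hK, -, -, hsmul, hpointed, hinv⟩
  obtain ⟨x, hxK, hx⟩ : ∃ x ∈ K, x ≠ 0 := by
    by_contra! h
    exact hK (Set.eq_singleton_iff_unique_mem.2 ⟨hK0, h⟩)
  obtain ⟨v, hv, hAv⟩ := heig
  obtain ⟨htr, hdet⟩ := trace_eq_and_det_eq_of_complex_eigenvalue hb hv hAv
  have hsq := sub_smul_one_mul_self_fin_two (b := |b|) htr (by rw [sq_abs, hdet])
  set t := Real.pi / |b|
  have hflip : NormedSpace.exp (t • A) = (-Real.exp (t * a)) • 1 := by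
    -- `exp` only depends on the topology, so any submultiplicative norm may be used here.
    let _ := Matrix.linftyOpNormedRing (n := Fin 2) (α := ℝ)
    let _ := Matrix.linftyOpNormedAlgebra (n := Fin 2) (R := ℝ) (α := ℝ)
    have h := NormedSpace.exp_smul_of_sub_mul_self_eq (abs_ne_zero.2 hb) hsq t
    rw [div_mul_cancel₀ _ (abs_ne_zero.2 hb), Real.cos_pi, Real.sin_pi] at h
    simp only [mul_neg_one, mul_zero, zero_div, zero_smul, add_zero] at h
    exact h
  have hmem := hinv t (by positivity) x hxK
  rw [hflip, smul_mulVec, one_mulVec] at hmem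
  exact hx (eq_zero_of_neg_smul_mem_of_pointed hsmul hpointed hxK
    (neg_neg_of_pos (Real.exp_pos _)) hmem)
end
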